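/- arXiv:2106.04082 — 2 statements merged into one kernel-verified Lean document; each statement's English description precedes it below -/
import Mathlib

section
/- Parameter-interchanged Hahn convolution: for a₁, b₁, b₂ > 0 and 0 ≤ x ≤ y, Σ_{z=x}^{y} π_H(x, z, a₁+b₁, b₂)·π_H(z, y, a₁, b₁) = π_H(x, y, a₁, b₁+b₂). -/
noncomputable def risingFactorial (a : ℝ) (k : ℕ) : ℝ := ∏ j ∈ Finset.range k, (a + j)

noncomputable def piH (x N : ℕ) (a b : ℝ) : ℝ :=
  (Nat.choose N x : ℝ) * risingFactorial a x * risingFactorial b (N - x)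
    / risingFactorial (a + b) N

/-! Put `z = x + k`, `y = x + n` and `α = a₁ + x`. Splitting every rising factorial at `x`, the
`k`-th summand becomes a factor independent of `k` times
`C(n,k) (α)_k (b₂)_k (b₁)_{n-k} / (α + b₁ + b₂)_k`, and the identity becomes the
Pfaff–Saalschütz sum `∑ₖ C(n,k) (α)_k (q)_k (p)_{n-k} / (α+p+q)_k = (p+q)_n (α+p)_n / (α+p+q)_n`.
Cleared of denominators, this is proved by induction on `n`: in passing from `n` to `n + 1` each
summand picks up the factor `(p+q+n)(α+p+n)` up to corrections `(α+k)(q+k)` times the `k`-th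
summand, which telescope in `k`. -/

open Finset

section RisingFactorial

variable (a : ℝ) (m k : ℕ)

lemma risingFactorial_zero : risingFactorial a 0 = 1 := prod_range_zero _

lemma risingFactorial_succ : risingFactorial a (k + 1) = risingFactorial a k * (a + k) :=
  prod_range_succ _ _

lemma risingFactorial_succ' : risingFactorial a (k + 1) = a * risingFactorial (a + 1) k := by
  simp only [risingFactorial, prod_range_succ', Nat.cast_add, Nat.cast_one, Nat.cast_zero,
    add_zero, add_assoc, add_comm (1 : ℝ), mul_comm]

lemma risingFactorial_add :
    risingFactorial a (m + k) = risingFactorial a m * risingFactorial (a + m) k := by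
  simp only [risingFactorial, prod_range_add, Nat.cast_add, add_assoc]

variable {a} in
lemma risingFactorial_pos (ha : 0 < a) : 0 < risingFactorial a k :=
  prod_pos fun j _ => by positivity

end RisingFactorial

section Saalschutz

variable (α p q : ℝ) (n k : ℕ)

/-- The `k`-th term of the Pfaff–Saalschütz sum multiplied by `(α + p + q)_n`, using
`(α + p + q)_n = (α + p + q)_k (α + p + q + k)_{n-k}`. -/
noncomputable def saalschutzTerm : ℝ :=
  n.choose k * risingFactorial α k * risingFactorial q k * risingFactorial p (n - k)
    * risingFactorial (α + p + q + k) (n - k)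

lemma saalschutzTerm_succ_zero :
    saalschutzTerm α p q (n + 1) 0
      = ((p + q + n) * (α + p + n) - α * q) * saalschutzTerm α p q n 0 := by
  simp only [saalschutzTerm, Nat.choose_zero_right, Nat.sub_zero, risingFactorial_zero,
    risingFactorial_succ, Nat.cast_zero, add_zero]
  ring

lemma saalschutzTerm_succ_succ (hk : k ≤ n) :
    saalschutzTerm α p q (n + 1) (k + 1)
      = ((p + q + n) * (α + p + n) - (α + (k + 1)) * (q + (k + 1)))
          * saalschutzTerm α p q n (k + 1)
        + (α + k) * (q + k) * saalschutzTerm α p q n k := by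
  obtain rfl | hlt := hk.eq_or_lt
  · simp only [saalschutzTerm, Nat.choose_self, Nat.choose_succ_self, Nat.sub_self,
      risingFactorial_zero, risingFactorial_succ]
    push_cast
    ring
  obtain ⟨m, rfl⟩ : ∃ m, n = k + 1 + m := ⟨n - (k + 1), by omega⟩
  have pascal := Nat.choose_succ_succ' (k + 1 + m) k
  have absorb : ((k + 1 + m).choose (k + 1) : ℝ) * (k + 1) = (k + 1 + m).choose k * (m + 1) := by
    have := Nat.choose_succ_right_eq (k + 1 + m) k
    rw [show k + 1 + m - k = m + 1 by omega] at this
    exact_mod_cast this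
  have shift : α + p + q + ((k + 1 : ℕ) : ℝ) = α + p + q + k + 1 := by push_cast; ring
  simp only [saalschutzTerm, show k + 1 + m + 1 - (k + 1) = m + 1 by omega,
    show k + 1 + m - (k + 1) = m by omega, show k + 1 + m - k = m + 1 by omega,
    risingFactorial_succ' (α + p + q + k), shift, risingFactorial_succ _ m,
    risingFactorial_succ _ k, pascal]
  push_cast
  linear_combination (-(p + m) * risingFactorial α k * (α + k) * risingFactorial q k * (q + k)
    * risingFactorial p m * risingFactorial (α + p + q + k + 1) m) * absorb

lemma saalschutzTerm_of_lt (hnk : n < k) : saalschutzTerm α p q n k = 0 := by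
  simp [saalschutzTerm, Nat.choose_eq_zero_of_lt hnk]

lemma sum_saalschutzTerm_succ :
    ∑ k ∈ range (n + 2), saalschutzTerm α p q (n + 1) k
      = (p + q + n) * (α + p + n) * ∑ k ∈ range (n + 1), saalschutzTerm α p q n k := by
  set c := (p + q + n) * (α + p + n)
  set u : ℕ → ℝ := fun k => (α + k) * (q + k) with hu
  set T := saalschutzTerm α p q n
  calc ∑ k ∈ range (n + 2), saalschutzTerm α p q (n + 1) k
      = ∑ k ∈ range (n + 2), (c - u k) * T k + ∑ k ∈ range (n + 1), u k * T k := by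
        rw [sum_range_succ', sum_range_succ' (fun k => (c - u k) * T k),
          sum_congr rfl fun k hk => saalschutzTerm_succ_succ α p q n k (mem_range_succ_iff.mp hk),
          sum_add_distrib, saalschutzTerm_succ_zero]
        simp only [hu, Nat.cast_add, Nat.cast_one, Nat.cast_zero, add_zero]
        ring
    _ = c * ∑ k ∈ range (n + 1), T k := by
        have hT : T (n + 1) = 0 := saalschutzTerm_of_lt α p q n (n + 1) n.lt_succ_self
        rw [sum_range_succ, hT, mul_zero, add_zero, ← sum_add_distrib, mul_sum]
        exact sum_congr rfl fun k _ => by ring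

theorem sum_saalschutzTerm :
    ∑ k ∈ range (n + 1), saalschutzTerm α p q n k
      = risingFactorial (p + q) n * risingFactorial (α + p) n := by
  induction n with
  | zero => simp [saalschutzTerm, risingFactorial_zero]
  | succ n ih =>
    rw [sum_saalschutzTerm_succ, ih, risingFactorial_succ, risingFactorial_succ]
    ring

end Saalschutz

section Hahn

variable {a b₁ b₂ : ℝ} {x n : ℕ}

lemma piH_mul_piH_eq_mul_saalschutzTerm (hab : 0 < a + b₁) (habb : 0 < a + b₁ + b₂) {k : ℕ}
    (hk : k ≤ n) :
    piH x (x + k) (a + b₁) b₂ * piH (x + k) (x + n) a b₁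
      = (x + n).choose x * risingFactorial a x
          / (risingFactorial (a + b₁ + b₂) (x + n) * risingFactorial (a + x + b₁) n)
        * saalschutzTerm (a + x) b₁ b₂ n k := by
  have hchoose :
      ((x + n).choose (x + k) : ℝ) * (x + k).choose x = (x + n).choose x * n.choose k := by
    have := Nat.choose_mul (n := x + n) (Nat.le_add_right x k)
    simp only [Nat.add_sub_cancel_left] at this
    exact_mod_cast this
  have hsplit : risingFactorial (a + b₁ + b₂ + x) n
      = risingFactorial (a + b₁ + b₂ + x) k
          * risingFactorial (a + x + b₁ + b₂ + k) (n - k) := by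
    rw [← Nat.add_sub_cancel' hk, risingFactorial_add, Nat.add_sub_cancel_left]
    ring_nf
  have hx : (0 : ℝ) ≤ x := x.cast_nonneg
  have hk₀ : (0 : ℝ) ≤ k := k.cast_nonneg
  simp only [piH, saalschutzTerm, Nat.add_sub_cancel_left, show x + n - (x + k) = n - k by omega,
    risingFactorial_add, hsplit, show a + b₁ + x = a + x + b₁ by ring]
  field_simp [(risingFactorial_pos x hab).ne', (risingFactorial_pos x habb).ne',
    (risingFactorial_pos k (by linarith : 0 < a + b₁ + b₂ + x)).ne',
    (risingFactorial_pos n (by linarith : 0 < a + x + b₁)).ne',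
    (risingFactorial_pos (n - k) (by linarith : 0 < a + x + b₁ + b₂ + k)).ne']
  linear_combination risingFactorial b₂ k * risingFactorial a x * risingFactorial (a + x) k
    * risingFactorial b₁ (n - k) * hchoose

lemma piH_self_add_eq_mul (hab : 0 < a + b₁) :
    piH x (x + n) a (b₁ + b₂)
      = (x + n).choose x * risingFactorial a x
          / (risingFactorial (a + b₁ + b₂) (x + n) * risingFactorial (a + x + b₁) n)
        * (risingFactorial (b₁ + b₂) n * risingFactorial (a + x + b₁) n) := by
  have hx : (0 : ℝ) ≤ x := x.cast_nonneg
  have hne : risingFactorial (a + x + b₁) n ≠ 0 := (risingFactorial_pos n (by linarith)).ne'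
  rw [piH, Nat.add_sub_cancel_left, ← add_assoc]
  field_simp

end Hahn

theorem stmt_12 (a₁ b₁ b₂ : ℝ) (ha₁ : 0 < a₁) (hb₁ : 0 < b₁) (hb₂ : 0 < b₂)
    (x y : ℕ) (hxy : x ≤ y) :
    ∑ z ∈ Finset.Icc x y, piH x z (a₁ + b₁) b₂ * piH z y a₁ b₁
      = piH x y a₁ (b₁ + b₂) := by
  obtain ⟨n, rfl⟩ := Nat.exists_eq_add_of_le hxy
  have hab : 0 < a₁ + b₁ := by linarith
  have habb : 0 < a₁ + b₁ + b₂ := by linarith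
  rw [← Ico_add_one_right_eq_Icc, sum_Ico_eq_sum_range, show x + n + 1 - x = n + 1 by omega,
    sum_congr rfl fun k hk =>
      piH_mul_piH_eq_mul_saalschutzTerm hab habb (mem_range_succ_iff.mp hk),
    ← mul_sum, sum_saalschutzTerm, piH_self_add_eq_mul hab]
end

section
/- q-Hahn nested convolution identity: for 0 < q < 1, 0 < a₁, b₁, b₂ < 1, and 0 ≤ x ≤ y, Σ_{z=x}^{y} π_{qH}(x, z, a₁, b₁)·π_{qH}(z, y, a₁b₁, b₂) = π_{qH}(x, y, a₁, b₁b₂). -/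
noncomputable def qPoch (a q : ℝ) (k : ℕ) : ℝ := ∏ j ∈ Finset.range k, (1 - a * q ^ j)

noncomputable def qBinom (n k : ℕ) (q : ℝ) : ℝ := qPoch q q n / (qPoch q q k * qPoch q q (n - k))

noncomputable def piqH (x N : ℕ) (a b q : ℝ) : ℝ :=
  qBinom N x q * qPoch a q x * qPoch b q (N - x) * a ^ (N - x) / qPoch (a * b) q N

/-!
In the product `π(x, z, a, b) · π(z, y, ab, c)` the factor `(ab; q)_z` cancels, and the
revision `[z, x] [y, z] = [y, x] [y - x, z - x]` pulls out everything that depends only on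
`x` and `y`. What is left is the q-Chu–Vandermonde sum
`∑ₖ [n, k] (b; q)_k (c; q)_{n-k} b^{n-k} = (bc; q)_n`, proved by induction on `n` through the
q-Pascal rule.
-/

open Finset

@[simp] lemma qPoch_zero (a q : ℝ) : qPoch a q 0 = 1 := prod_range_zero _

lemma qPoch_succ (a q : ℝ) (k : ℕ) : qPoch a q (k + 1) = qPoch a q k * (1 - a * q ^ k) :=
  prod_range_succ _ _

lemma qPoch_ne_zero {a q : ℝ} (ha : |a| < 1) (hq : |q| ≤ 1) (k : ℕ) : qPoch a q k ≠ 0 := by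
  refine prod_ne_zero_iff.mpr fun j _ => sub_ne_zero.mpr fun h => ?_
  have : |a * q ^ j| < 1 := by
    rw [abs_mul, abs_pow]
    exact mul_lt_one_of_nonneg_of_lt_one_left (abs_nonneg a) ha (pow_le_one₀ (abs_nonneg q) hq)
  rw [← h, abs_one] at this
  exact this.false

section qBinom

variable {q : ℝ}

@[simp] lemma qBinom_zero_right (hq : ∀ n, qPoch q q n ≠ 0) (n : ℕ) : qBinom n 0 q = 1 := by
  simp [qBinom, hq]

@[simp] lemma qBinom_self (hq : ∀ n, qPoch q q n ≠ 0) (n : ℕ) : qBinom n n q = 1 := by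
  simp [qBinom, hq]

/-- Truncated subtraction makes `qBinom n (n + 1) q = 1 / (1 - q ^ (n + 1))` rather than `0`. -/
lemma qBinom_succ_succ (hq : ∀ n, qPoch q q n ≠ 0) {n k : ℕ} (hk : k < n) :
    qBinom (n + 1) (k + 1) q = qBinom n k q + q ^ (k + 1) * qBinom n (k + 1) q := by
  obtain ⟨m, rfl⟩ : ∃ m, n = k + 1 + m := ⟨n - (k + 1), by omega⟩
  have hk : k + 1 + m - k = m + 1 := by omega
  simp only [qBinom, Nat.add_sub_add_right, hk, add_tsub_cancel_left]
  obtain ⟨hk0, hk1⟩ := mul_ne_zero_iff.mp (qPoch_succ q q k ▸ hq (k + 1))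
  obtain ⟨hm0, hm1⟩ := mul_ne_zero_iff.mp (qPoch_succ q q m ▸ hq (m + 1))
  rw [qPoch_succ q q (k + 1 + m), qPoch_succ q q k, qPoch_succ q q m]
  field_simp
  ring

lemma qBinom_mul_qBinom (hq : ∀ n, qPoch q q n ≠ 0) {i j m : ℕ} (hij : i ≤ j) (hjm : j ≤ m) :
    qBinom j i q * qBinom m j q = qBinom m i q * qBinom (m - i) (j - i) q := by
  have hsub : m - i - (j - i) = m - j := by omega
  simp only [qBinom, hsub]
  have := hq i; have := hq j; have := hq m
  have := hq (j - i); have := hq (m - j); have := hq (m - i)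
  field_simp

/-- The q-Pascal rule, summed against an arbitrary weight `g k (n - k)`. -/
lemma sum_qBinom_succ (hq : ∀ n, qPoch q q n ≠ 0) (g : ℕ → ℕ → ℝ) (n : ℕ) :
    ∑ k ∈ range (n + 2), qBinom (n + 1) k q * g k (n + 1 - k)
      = ∑ k ∈ range (n + 1), qBinom n k q * (g (k + 1) (n - k) + q ^ k * g k (n + 1 - k)) := by
  simp only [mul_add, sum_add_distrib]
  rw [sum_range_succ', sum_range_succ, sum_range_succ _ n,
    sum_range_succ' (fun k => qBinom n k q * (q ^ k * g k (n + 1 - k)))]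
  have hpascal : ∀ k ∈ range n, qBinom (n + 1) (k + 1) q * g (k + 1) (n + 1 - (k + 1))
      = qBinom n k q * g (k + 1) (n - k)
        + qBinom n (k + 1) q * (q ^ (k + 1) * g (k + 1) (n + 1 - (k + 1))) := by
    intro k hk
    rw [qBinom_succ_succ hq (mem_range.mp hk), Nat.add_sub_add_right]
    ring
  rw [sum_congr rfl hpascal, sum_add_distrib]
  simp only [qBinom_self hq, qBinom_zero_right hq, Nat.add_sub_add_right, tsub_self, tsub_zero,
    pow_zero, one_mul]
  ring

theorem sum_qBinom_mul_qPoch (hq : ∀ n, qPoch q q n ≠ 0) (b c : ℝ) (n : ℕ) :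
    ∑ k ∈ range (n + 1), qBinom n k q * (qPoch b q k * qPoch c q (n - k) * b ^ (n - k))
      = qPoch (b * c) q n := by
  induction n with
  | zero => simp [hq]
  | succ n ih =>
    have hrec := sum_qBinom_succ hq (fun i j => qPoch b q i * qPoch c q j * b ^ j) n
    beta_reduce at hrec
    rw [hrec, qPoch_succ, ← ih, sum_mul]
    refine sum_congr rfl fun k hk => ?_
    obtain ⟨l, rfl⟩ : ∃ l, n = k + l := ⟨n - k, by have := mem_range.mp hk; omega⟩
    have hl : k + l + 1 - k = l + 1 := by omega
    simp only [hl, add_tsub_cancel_left, qPoch_succ, pow_add]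
    ring

end qBinom

lemma piqH_mul_piqH {q a b c : ℝ} (hq : ∀ n, qPoch q q n ≠ 0) {x y z : ℕ}
    (hab : qPoch (a * b) q z ≠ 0) (hxz : x ≤ z) (hzy : z ≤ y) :
    piqH x z a b q * piqH z y (a * b) c q
      = qBinom y x q * qPoch a q x * a ^ (y - x) / qPoch (a * b * c) q y *
        (qBinom (y - x) (z - x) q * (qPoch b q (z - x) * qPoch c q (y - z) * b ^ (y - z))) := by
  have hbinom := qBinom_mul_qBinom hq hxz hzy
  have hpow : a ^ (y - x) = a ^ (z - x) * a ^ (y - z) := by rw [← pow_add]; congr 1; omega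
  rw [piqH, piqH, hpow]
  field_simp
  linear_combination (qPoch a q x * qPoch b q (z - x) * qPoch c q (y - z) * a ^ (z - x) *
    a ^ (y - z) * b ^ (y - z) / qPoch (a * b * c) q y) * hbinom

theorem sum_piqH_mul_piqH {q a b c : ℝ} (hq : ∀ n, qPoch q q n ≠ 0)
    (hab : ∀ n, qPoch (a * b) q n ≠ 0) {x y : ℕ} (hxy : x ≤ y) :
    ∑ z ∈ Icc x y, piqH x z a b q * piqH z y (a * b) c q = piqH x y a (b * c) q := by
  have hreindex : ∀ f : ℕ → ℕ → ℝ,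
      ∑ z ∈ Icc x y, f (z - x) (y - z) = ∑ k ∈ range (y - x + 1), f k (y - x - k) := by
    intro f
    rw [← Ico_add_one_right_eq_Icc, sum_Ico_eq_sum_range, Nat.sub_add_comm hxy]
    simp only [add_tsub_cancel_left, Nat.sub_sub]
  rw [sum_congr rfl fun z hz => piqH_mul_piqH hq (hab z) (mem_Icc.mp hz).1 (mem_Icc.mp hz).2,
    ← mul_sum, hreindex fun i j => qBinom (y - x) i q * (qPoch b q i * qPoch c q j * b ^ j),
    sum_qBinom_mul_qPoch hq, piqH, mul_assoc a]
  ring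

theorem stmt_16_general (q a₁ b₁ b₂ : ℝ) (hq : 0 < q) (hq1 : q < 1)
    (ha₁ : 0 < a₁) (ha₁' : a₁ < 1) (hb₁ : 0 < b₁) (hb₁' : b₁ < 1)
    (x y : ℕ) (hxy : x ≤ y) :
    ∑ z ∈ Finset.Icc x y, piqH x z a₁ b₁ q * piqH z y (a₁ * b₁) b₂ q
      = piqH x y a₁ (b₁ * b₂) q := by
  have hq' : |q| < 1 := abs_lt.mpr ⟨by linarith, hq1⟩
  have hab : |a₁ * b₁| < 1 := by
    rw [abs_of_pos (mul_pos ha₁ hb₁)]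
    nlinarith
  exact sum_piqH_mul_piqH (qPoch_ne_zero hq' hq'.le) (qPoch_ne_zero hab hq'.le) hxy

theorem stmt_16 (q a₁ b₁ b₂ : ℝ) (hq : 0 < q) (hq1 : q < 1)
    (ha₁ : 0 < a₁) (ha₁' : a₁ < 1) (hb₁ : 0 < b₁) (hb₁' : b₁ < 1)
    (hb₂ : 0 < b₂) (hb₂' : b₂ < 1) (x y : ℕ) (hxy : x ≤ y) :
    ∑ z ∈ Finset.Icc x y, piqH x z a₁ b₁ q * piqH z y (a₁ * b₁) b₂ q
      = piqH x y a₁ (b₁ * b₂) q :=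
  stmt_16_general q a₁ b₁ b₂ hq hq1 ha₁ ha₁' hb₁ hb₁' x y hxy
end
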